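/- arXiv:1705.02742 — 10 statements merged into one kernel-verified Lean document; each statement's English description precedes it below -/
import Mathlib

section
/- Let y > 0 and let g ∈ 𝓕_y with integrable derivative g'. Then the infimum of ∫₀^y |g' − f'| dλ over all f ∈ 𝓕⁺_y equals ∫₀^y (g')⁻ dλ; that is, LOI_y(g) = ∫₀^y (g')⁻ dλ. -/
open MeasureTheory Set Filter Metric Topology

lemma max_eq_half_formula (a : ℝ) : max a 0 = (a + |a|) * (2 : ℝ)⁻¹ := by
  rcases le_total a 0 with h | h
  · rw [max_eq_right h, abs_of_nonpos h]; ring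
  · rw [max_eq_left h, abs_of_nonneg h]; ring

lemma intervalIntegrable_max_zero {a b : ℝ} {f : ℝ → ℝ}
    (hf : IntervalIntegrable f volume a b) :
    IntervalIntegrable (fun x => max (f x) 0) volume a b := by
  have h : (fun x => max (f x) 0) = fun x => (f x + |f x|) * (2 : ℝ)⁻¹ := by
    funext x; exact max_eq_half_formula (f x)
  rw [h]
  exact (hf.add hf.abs).mul_const _

/-- If the integral function of `f'` is monotone on `[0, y]`, then `f' ≥ 0` a.e. on `[0, y]`. -/
lemma ae_nonneg_of_monotoneOn_integral (y : ℝ) (hy : 0 < y) (f' : ℝ → ℝ)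
    (hf' : IntervalIntegrable f' volume 0 y)
    (hmono : MonotoneOn (fun x => ∫ t in (0:ℝ)..x, f' t) (Icc (0:ℝ) y)) :
    ∀ᵐ x ∂(volume.restrict (Icc (0:ℝ) y)), 0 ≤ f' x := by
  have hsub : ∀ a b : ℝ, a ∈ Icc (0:ℝ) y → b ∈ Icc (0:ℝ) y →
      IntervalIntegrable f' volume a b := by
    intro a b ha hb
    refine hf'.mono_set ?_
    rw [uIcc_of_le hy.le]
    exact uIcc_subset_Icc ha hb
  have hF : ∀ a b : ℝ, a ∈ Icc (0:ℝ) y → b ∈ Icc (0:ℝ) y → a ≤ b →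
      0 ≤ ∫ t in a..b, f' t := by
    intro a b ha hb hab
    have h0 : (0:ℝ) ∈ Icc (0:ℝ) y := ⟨le_refl _, hy.le⟩
    have h1 : (∫ t in (0:ℝ)..a, f' t) + ∫ t in a..b, f' t = ∫ t in (0:ℝ)..b, f' t :=
      intervalIntegral.integral_add_adjacent_intervals (hsub 0 a h0 ha) (hsub a b ha hb)
    have h2 : (∫ t in (0:ℝ)..a, f' t) ≤ ∫ t in (0:ℝ)..b, f' t := hmono ha hb hab
    linarith
  set h : ℝ → ℝ := (Ioo (0:ℝ) y).indicator f' with hh_def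
  have hint : IntegrableOn f' (Ioo (0:ℝ) y) volume :=
    ((intervalIntegrable_iff_integrableOn_Ioc_of_le hy.le).mp hf').mono_set Ioo_subset_Ioc_self
  have hh : Integrable h volume := hint.integrable_indicator measurableSet_Ioo
  have hloc : LocallyIntegrable h volume := hh.locallyIntegrable
  have key := IsUnifLocDoublingMeasure.ae_tendsto_average (μ := (volume : Measure ℝ)) hloc 1
  have h1 : ∀ᵐ x ∂(volume : Measure ℝ), x ∈ Ioo (0:ℝ) y → 0 ≤ f' x := by
    filter_upwards [key] with x hx hmem
    have hev : ∀ᶠ r in 𝓝[>] (0:ℝ), x ∈ closedBall x (1 * r) := by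
      filter_upwards [self_mem_nhdsWithin] with r hr
      simpa using Metric.mem_closedBall_self (x := x) (le_of_lt hr)
    have tend : Tendsto (fun r : ℝ => ⨍ t in closedBall x r, h t) (𝓝[>] (0:ℝ)) (𝓝 (h x)) :=
      hx (fun _ : ℝ => x) id tendsto_id hev
    have hnn : ∀ᶠ r in 𝓝[>] (0:ℝ), 0 ≤ ⨍ t in closedBall x r, h t := by
      filter_upwards [self_mem_nhdsWithin] with r hr
      have hr' : (0:ℝ) < r := hr
      set a : ℝ := max (x - r) 0 with ha_def
      set b : ℝ := min (x + r) y with hb_def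
      have hax : a ≤ x := max_le (by linarith) hmem.1.le
      have hxb : x ≤ b := le_min (by linarith) hmem.2.le
      have hab : a ≤ b := hax.trans hxb
      have ha : a ∈ Icc (0:ℝ) y := ⟨le_max_right _ _, hax.trans (hmem.2.le)⟩
      have hb : b ∈ Icc (0:ℝ) y := ⟨(le_max_right _ _).trans (hax.trans hxb), min_le_right _ _⟩
      have hseteq : (Metric.closedBall x r ∩ Ioo (0:ℝ) y : Set ℝ) =ᵐ[(volume : Measure ℝ)] (Ioc a b : Set ℝ) := by
        rw [Real.closedBall_eq_Icc]
        have hna : ∀ᵐ t ∂(volume : Measure ℝ), t ≠ a := by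
          rw [ae_iff]; simpa using measure_singleton a
        have hny : ∀ᵐ t ∂(volume : Measure ℝ), t ≠ y := by
          rw [ae_iff]; simpa using measure_singleton y
        rw [Filter.eventuallyEq_set]
        filter_upwards [hna, hny] with t hta hty
        simp only [mem_inter_iff, mem_Icc, mem_Ioo, mem_Ioc]
        constructor
        · rintro ⟨⟨h1, h2⟩, h3, h4⟩
          refine ⟨lt_of_le_of_ne (max_le h1 h3.le) (Ne.symm hta), le_min h2 h4.le⟩
        · rintro ⟨h1, h2⟩
          have hta' : max (x - r) 0 < t := h1
          have h2' : t ≤ min (x + r) y := h2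
          refine ⟨⟨le_of_lt (lt_of_le_of_lt (le_max_left _ _) hta'),
            h2'.trans (min_le_left _ _)⟩,
            lt_of_le_of_lt (le_max_right _ _) hta',
            lt_of_le_of_ne (h2'.trans (min_le_right _ _)) hty⟩
      have hintnn : 0 ≤ ∫ t in closedBall x r, h t := by
        rw [hh_def, setIntegral_indicator measurableSet_Ioo, setIntegral_congr_set hseteq,
          ← intervalIntegral.integral_of_le hab]
        exact hF a b ha hb hab
      rw [setAverage_eq]
      exact smul_nonneg (by positivity) hintnn
    have : 0 ≤ h x := ge_of_tendsto tend hnn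
    rwa [hh_def, indicator_of_mem hmem] at this
  have hn0 : ∀ᵐ x ∂(volume : Measure ℝ), x ≠ 0 := by
    rw [ae_iff]; simpa using measure_singleton (0:ℝ)
  have hny : ∀ᵐ x ∂(volume : Measure ℝ), x ≠ y := by
    rw [ae_iff]; simpa using measure_singleton y
  have h2 : ∀ᵐ x ∂(volume : Measure ℝ), x ∈ Icc (0:ℝ) y → 0 ≤ f' x := by
    filter_upwards [h1, hn0, hny] with x hx hx0 hxy hmem
    exact hx ⟨lt_of_le_of_ne hmem.1 (Ne.symm hx0), lt_of_le_of_ne hmem.2 hxy⟩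
  exact (ae_restrict_iff' measurableSet_Icc).mpr h2

/-- The index of lack of increase `LOI_y(g)`, defined as the infimum over all
non-decreasing absolutely continuous `f` with `f 0 = 0` (given via their derivatives `f'`)
of `∫₀^y |g' - f'|`, equals `∫₀^y (g')⁻`. -/
theorem loi_eq_integral_neg_part (y : ℝ) (hy : 0 < y) (g g' : ℝ → ℝ)
    (hg' : IntervalIntegrable g' volume 0 y)
    (hg : ∀ x ∈ Icc (0 : ℝ) y, g x = ∫ t in (0 : ℝ)..x, g' t) :
    sInf {r : ℝ | ∃ f' : ℝ → ℝ, IntervalIntegrable f' volume 0 y ∧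
        MonotoneOn (fun x => ∫ t in (0 : ℝ)..x, f' t) (Icc (0 : ℝ) y) ∧
        r = ∫ x in (0 : ℝ)..y, |g' x - f' x|} =
      ∫ x in (0 : ℝ)..y, max (-(g' x)) 0 := by
  set S := {r : ℝ | ∃ f' : ℝ → ℝ, IntervalIntegrable f' volume 0 y ∧
      MonotoneOn (fun x => ∫ t in (0 : ℝ)..x, f' t) (Icc (0 : ℝ) y) ∧
      r = ∫ x in (0 : ℝ)..y, |g' x - f' x|} with hS_def
  set m := ∫ x in (0 : ℝ)..y, max (-(g' x)) 0 with hm_def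
  have hmax_int : IntervalIntegrable (fun x => max (-(g' x)) 0) volume 0 y :=
    intervalIntegrable_max_zero hg'.neg
  -- membership : m ∈ S
  have hmem : m ∈ S := by
    refine ⟨fun x => max (g' x) 0, intervalIntegrable_max_zero hg', ?_, ?_⟩
    · intro u hu v hv huv
      have hsub : ∀ a b : ℝ, a ∈ Icc (0:ℝ) y → b ∈ Icc (0:ℝ) y →
          IntervalIntegrable (fun x => max (g' x) 0) volume a b := by
        intro a b ha hb
        refine (intervalIntegrable_max_zero hg').mono_set ?_
        rw [uIcc_of_le hy.le]
        exact uIcc_subset_Icc ha hb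
      have h0 : (0:ℝ) ∈ Icc (0:ℝ) y := ⟨le_refl _, hy.le⟩
      have hadd : (∫ t in (0:ℝ)..u, max (g' t) 0) + ∫ t in u..v, max (g' t) 0
          = ∫ t in (0:ℝ)..v, max (g' t) 0 :=
        intervalIntegral.integral_add_adjacent_intervals (hsub 0 u h0 hu) (hsub u v hu hv)
      have hnn : 0 ≤ ∫ t in u..v, max (g' t) 0 :=
        intervalIntegral.integral_nonneg huv (fun t _ => le_max_right _ _)
      simp only
      linarith
    · refine intervalIntegral.integral_congr (fun x _ => ?_)
      show max (-(g' x)) 0 = |g' x - max (g' x) 0|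
      rcases le_total (g' x) 0 with h | h
      · rw [max_eq_right h, sub_zero, abs_of_nonpos h, max_eq_left (neg_nonneg.mpr h)]
      · rw [max_eq_left h, sub_self, abs_zero, max_eq_right (neg_nonpos.mpr h)]
  -- lower bound
  have hlb : ∀ r ∈ S, m ≤ r := by
    rintro r ⟨f', hf', hmono, rfl⟩
    have hae := ae_nonneg_of_monotoneOn_integral y hy f' hf' hmono
    refine intervalIntegral.integral_mono_ae_restrict hy.le hmax_int (hg'.sub hf').abs ?_
    filter_upwards [hae] with x hx
    rcases le_total (g' x) 0 with h | h
    · have : -(g' x) ≤ |g' x - f' x| := by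
        rw [abs_sub_comm]
        calc -(g' x) ≤ f' x - g' x := by linarith
          _ ≤ |f' x - g' x| := le_abs_self _
      simpa [max_eq_left (by linarith : (0:ℝ) ≤ -(g' x))] using this
    · simp [max_eq_right (by linarith : -(g' x) ≤ (0:ℝ))]
  exact le_antisymm (csInf_le ⟨m, hlb⟩ hmem) (le_csInf ⟨m, hmem⟩ hlb)
end

section
/- Let y > 0 and let g ∈ 𝓕_y with integrable derivative g'. Define f₁(x) = ∫₀^x (g')⁺(t) dt for x ∈ [0,y]. Then f₁ ∈ 𝓕⁺_y and ∫₀^y |g' − f₁'| dλ = ∫₀^y (g')⁻ dλ; hence the infimum defining LOI_y(g) is attained at f₁. -/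
open MeasureTheory Set

private lemma mono_int_of_nonneg (y : ℝ) (p : ℝ → ℝ)
    (hp : IntervalIntegrable p volume 0 y) (hnn : ∀ t, 0 ≤ p t) :
    MonotoneOn (fun x => ∫ t in (0 : ℝ)..x, p t) (Icc (0 : ℝ) y) := by
  intro a ha b hb hab
  have h1 : IntervalIntegrable p volume 0 a :=
    hp.mono_set (by rw [uIcc_of_le ha.1, uIcc_of_le (ha.1.trans ha.2)]; exact Icc_subset_Icc le_rfl ha.2)
  have h2 : IntervalIntegrable p volume a b :=
    hp.mono_set (by rw [uIcc_of_le hab, uIcc_of_le (ha.1.trans ha.2)]; exact Icc_subset_Icc ha.1 hb.2)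
  have hadd := intervalIntegral.integral_add_adjacent_intervals h1 h2
  have hpos : 0 ≤ ∫ t in a..b, p t := intervalIntegral.integral_nonneg hab fun t _ => hnn t
  simp only
  linarith

private lemma abs_sub_max_eq (a : ℝ) : |a - max a 0| = max (-a) 0 := by
  rcases le_total 0 a with h | h
  · simp [max_eq_left h, max_eq_right (neg_nonpos.mpr h)]
  · rw [max_eq_right h, max_eq_left (neg_nonneg.mpr h), sub_zero, abs_of_nonpos h]

/-- Any admissible `f'` (integrable with monotone indefinite integral) is a.e.
nonnegative on `Ioo 0 y`. -/
private lemma ae_nonneg_of_monotone (y : ℝ) (f' : ℝ → ℝ)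
    (hf' : IntervalIntegrable f' volume 0 y)
    (hmono : MonotoneOn (fun x => ∫ t in (0 : ℝ)..x, f' t) (Icc (0 : ℝ) y)) :
    ∀ᵐ x ∂(volume : Measure ℝ), x ∈ Ioo (0 : ℝ) y → 0 ≤ f' x := by
  set h : ℝ → ℝ := (Ioc (0 : ℝ) y).indicator f' with hh
  rcases le_or_gt y 0 with hy0 | hy0
  · filter_upwards with x hx; exact absurd (hx.1.trans hx.2) (not_lt.mpr hy0)
  have hint : Integrable h volume := by
    rw [hh, integrable_indicator_iff measurableSet_Ioc]
    exact hf'.1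
  have hloc : LocallyIntegrable h volume := hint.locallyIntegrable
  set v := IsUnifLocDoublingMeasure.vitaliFamily (volume : Measure ℝ) 1 with hv
  filter_upwards [v.ae_tendsto_average hloc] with x hx hxmem
  have htd : Filter.Tendsto (fun z => ⨍ t in Icc x z, h t) (nhdsWithin x (Ioi x))
      (nhds (h x)) := hx.comp (Real.tendsto_Icc_vitaliFamily_right x)
  have hev : ∀ᶠ z in nhdsWithin x (Ioi x), 0 ≤ ⨍ t in Icc x z, h t := by
    filter_upwards [Ioo_mem_nhdsGT_of_mem (show x ∈ Ico x y from ⟨le_rfl, hxmem.2⟩)]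
      with z hz
    have hsub : Icc x z ⊆ Ioc 0 y := fun t ht => ⟨hxmem.1.trans_le ht.1, ht.2.trans hz.2.le⟩
    have heq : ∫ t in Icc x z, h t = ∫ t in x..z, f' t := by
      rw [setIntegral_congr_fun measurableSet_Icc
        (fun t ht => indicator_of_mem (hsub ht) f'),
        integral_Icc_eq_integral_Ioc, intervalIntegral.integral_of_le hz.1.le]
    have hix : IntervalIntegrable f' volume 0 x := by
      apply hf'.mono_set
      rw [uIcc_of_le hxmem.1.le, uIcc_of_le hy0.le]
      exact Icc_subset_Icc le_rfl hxmem.2.le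
    have hxz : IntervalIntegrable f' volume x z := by
      apply hf'.mono_set
      rw [uIcc_of_le hz.1.le, uIcc_of_le hy0.le]
      exact Icc_subset_Icc hxmem.1.le hz.2.le
    have hFz : (∫ t in (0:ℝ)..x, f' t) ≤ ∫ t in (0:ℝ)..z, f' t :=
      hmono ⟨hxmem.1.le, hxmem.2.le⟩ ⟨hxmem.1.le.trans hz.1.le, hz.2.le⟩ hz.1.le
    have hnn : 0 ≤ ∫ t in x..z, f' t := by
      have := intervalIntegral.integral_add_adjacent_intervals hix hxz
      linarith
    rw [setAverage_eq, heq]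
    exact smul_nonneg (by positivity) hnn
  have hhx : 0 ≤ h x := ge_of_tendsto htd hev
  rwa [hh, indicator_of_mem (Ioo_subset_Ioc_self hxmem) f'] at hhx

/-- The function `f₁(x) = ∫₀^x (g')⁺` is non-decreasing (so belongs to `𝓕⁺_y`),
realizes `∫₀^y |g' - f₁'| = ∫₀^y (g')⁻`, and hence attains the infimum defining
`LOI_y(g)`. -/
theorem loi_infimum_attained (y : ℝ) (hy : 0 < y) (g g' : ℝ → ℝ)
    (hg' : IntervalIntegrable g' volume 0 y)
    (hg : ∀ x ∈ Icc (0 : ℝ) y, g x = ∫ t in (0 : ℝ)..x, g' t)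
    (f₁ : ℝ → ℝ)
    (hf₁ : ∀ x ∈ Icc (0 : ℝ) y, f₁ x = ∫ t in (0 : ℝ)..x, max (g' t) 0) :
    MonotoneOn f₁ (Icc (0 : ℝ) y) ∧
    (∫ x in (0 : ℝ)..y, |g' x - max (g' x) 0|) = ∫ x in (0 : ℝ)..y, max (-(g' x)) 0 ∧
    sInf {r : ℝ | ∃ f' : ℝ → ℝ, IntervalIntegrable f' volume 0 y ∧
        MonotoneOn (fun x => ∫ t in (0 : ℝ)..x, f' t) (Icc (0 : ℝ) y) ∧
        r = ∫ x in (0 : ℝ)..y, |g' x - f' x|} =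
      ∫ x in (0 : ℝ)..y, |g' x - max (g' x) 0| := by
  have hpos : IntervalIntegrable (fun t => max (g' t) 0) volume 0 y :=
    ⟨hg'.1.pos_part, hg'.2.pos_part⟩
  have hmono : MonotoneOn (fun x => ∫ t in (0 : ℝ)..x, max (g' t) 0) (Icc (0 : ℝ) y) :=
    mono_int_of_nonneg y _ hpos fun t => le_max_right _ _
  have hmonof₁ : MonotoneOn f₁ (Icc (0 : ℝ) y) := by
    intro a ha b hb hab
    rw [hf₁ a ha, hf₁ b hb]
    exact hmono ha hb hab
  have heq2 : (∫ x in (0 : ℝ)..y, |g' x - max (g' x) 0|)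
      = ∫ x in (0 : ℝ)..y, max (-(g' x)) 0 :=
    intervalIntegral.integral_congr fun x _ => abs_sub_max_eq (g' x)
  refine ⟨hmonof₁, heq2, ?_⟩
  have hlb : ∀ r ∈ {r : ℝ | ∃ f' : ℝ → ℝ, IntervalIntegrable f' volume 0 y ∧
      MonotoneOn (fun x => ∫ t in (0 : ℝ)..x, f' t) (Icc (0 : ℝ) y) ∧
      r = ∫ x in (0 : ℝ)..y, |g' x - f' x|},
      (∫ x in (0 : ℝ)..y, |g' x - max (g' x) 0|) ≤ r := by
    rintro r ⟨f', hf', hm, rfl⟩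
    rw [heq2]
    have hae : ∀ᵐ x ∂(volume.restrict (Icc (0:ℝ) y)),
        max (-(g' x)) 0 ≤ |g' x - f' x| := by
      have h1 : ∀ᵐ x ∂(volume : Measure ℝ), x ∈ Ioo (0 : ℝ) y → 0 ≤ f' x :=
        ae_nonneg_of_monotone y f' hf' hm
      have h2 : ∀ᵐ x ∂(volume : Measure ℝ), x ≠ 0 ∧ x ≠ y := by
        have hsub : {x : ℝ | ¬(x ≠ 0 ∧ x ≠ y)} ⊆ ({0, y} : Set ℝ) := by
          intro x hx
          simp only [mem_setOf_eq, not_and_or, not_ne_iff] at hx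
          simpa using hx
        exact measure_mono_null hsub
          (measure_union_null (measure_singleton 0) (measure_singleton y))
      filter_upwards [ae_restrict_of_ae h1, ae_restrict_of_ae h2,
        ae_restrict_mem measurableSet_Icc] with x hx1 hx2 hx3
      have hxI : x ∈ Ioo (0:ℝ) y :=
        ⟨lt_of_le_of_ne hx3.1 (Ne.symm hx2.1), lt_of_le_of_ne hx3.2 hx2.2⟩
      have hfx := hx1 hxI
      rcases le_total 0 (g' x) with h | h
      · rw [max_eq_right (neg_nonpos.mpr h)]; exact abs_nonneg _
      · rw [max_eq_left (neg_nonneg.mpr h)]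
        calc -(g' x) ≤ f' x - g' x := by linarith
          _ ≤ |g' x - f' x| := by rw [abs_sub_comm]; exact le_abs_self _
    exact intervalIntegral.integral_mono_ae_restrict hy.le
      ⟨hg'.neg.1.pos_part, hg'.neg.2.pos_part⟩ ((hg'.sub hf').abs) hae
  have hmem : (∫ x in (0 : ℝ)..y, |g' x - max (g' x) 0|) ∈
      {r : ℝ | ∃ f' : ℝ → ℝ, IntervalIntegrable f' volume 0 y ∧
        MonotoneOn (fun x => ∫ t in (0 : ℝ)..x, f' t) (Icc (0 : ℝ) y) ∧
        r = ∫ x in (0 : ℝ)..y, |g' x - f' x|} :=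
    ⟨fun t => max (g' t) 0, hpos, hmono, rfl⟩
  exact le_antisymm (csInf_le ⟨_, hlb⟩ hmem) (le_csInf ⟨_, hmem⟩ hlb)
end

section
/- Let y > 0, p ≥ 1, and let g ∈ 𝓕_y with derivative g' such that ((g')⁻)^p is integrable on [0,y]. Then the infimum of (∫₀^y |g' − f'|^p dλ)^{1/p} over all f ∈ 𝓕⁺_y (with f' such that |g' − f'|^p is integrable) equals (∫₀^y ((g')⁻)^p dλ)^{1/p}, and it is attained at the function f₁ with f₁' = (g')⁺; in particular the minimizer does not depend on p. -/
open MeasureTheory Set Filter Topology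

lemma ae_nonneg_of_monotone_primitive {y : ℝ} (hy : 0 < y) {f : ℝ → ℝ}
    (hf : IntervalIntegrable f volume 0 y)
    (hmono : MonotoneOn (fun x => ∫ t in (0:ℝ)..x, f t) (Icc (0:ℝ) y)) :
    ∀ᵐ x ∂(volume.restrict (Icc (0:ℝ) y)), 0 ≤ f x := by
  set h : ℝ → ℝ := Set.indicator (Icc (0:ℝ) y) f with hh
  have hIcc : IntegrableOn f (Icc (0:ℝ) y) volume := by
    rw [integrableOn_Icc_iff_integrableOn_Ioc]
    exact (intervalIntegrable_iff_integrableOn_Ioc_of_le hy.le).mp hf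
  have hint : Integrable h volume :=
    (integrable_indicator_iff measurableSet_Icc).mpr hIcc
  have hae := IsUnifLocDoublingMeasure.ae_tendsto_average (μ := (volume : Measure ℝ))
    hint.locallyIntegrable 1
  have key : ∀ᵐ x ∂(volume : Measure ℝ), x ∈ Ioo (0:ℝ) y → 0 ≤ f x := by
    filter_upwards [hae] with x hx hxmem
    have hδ : Tendsto (fun j : ℝ => j) (𝓝[>] (0:ℝ)) (𝓝[>] (0:ℝ)) := tendsto_id
    have hxb : ∀ᶠ j : ℝ in 𝓝[>] (0:ℝ), x ∈ Metric.closedBall x (1 * j) := by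
      filter_upwards [self_mem_nhdsWithin] with j hj
      simpa [Metric.mem_closedBall] using by linarith [mem_Ioi.mp hj]
    have htend := hx (fun _ : ℝ => x) (fun j => j) hδ hxb
    have hε : (0:ℝ) < min x (y - x) := lt_min hxmem.1 (by linarith [hxmem.2])
    have hev : ∀ᶠ j : ℝ in 𝓝[>] (0:ℝ), 0 ≤ ⨍ t in Metric.closedBall x j, h t := by
      filter_upwards [Ioo_mem_nhdsGT_of_mem (Set.mem_Ico.mpr ⟨le_rfl, hε⟩)] with j hj
      obtain ⟨hj0, hjε⟩ := hj
      have hjx : j < x := lt_of_lt_of_le hjε (min_le_left _ _)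
      have hjy : j < y - x := lt_of_lt_of_le hjε (min_le_right _ _)
      have hsub : Metric.closedBall x j ⊆ Icc (0:ℝ) y := by
        rw [Real.closedBall_eq_Icc]
        apply Icc_subset_Icc
        · have := lt_of_lt_of_le hjε (min_le_left _ _); linarith
        · have := lt_of_lt_of_le hjε (min_le_right _ _); linarith
      have h1 : ∫ t in Metric.closedBall x j, h t = ∫ t in (x - j)..(x + j), f t := by
        rw [Real.closedBall_eq_Icc, setIntegral_congr_fun measurableSet_Icc
          (fun t ht => Set.indicator_of_mem (hsub (by rwa [Real.closedBall_eq_Icc])) f),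
          integral_Icc_eq_integral_Ioc, ← intervalIntegral.integral_of_le (by linarith)]
      have hxint : IntervalIntegrable f volume 0 (x + j) :=
        hf.mono_set (by rw [uIcc_of_le (by linarith), uIcc_of_le hy.le]; exact Icc_subset_Icc le_rfl (by
          have := lt_of_lt_of_le hjε (min_le_right _ _); linarith))
      have hxint' : IntervalIntegrable f volume 0 (x - j) :=
        hf.mono_set (by rw [uIcc_of_le (by have := lt_of_lt_of_le hjε (min_le_left _ _); linarith),
          uIcc_of_le hy.le]; exact Icc_subset_Icc le_rfl (by linarith)) 
      have h2 : (0:ℝ) ≤ ∫ t in (x - j)..(x + j), f t := by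
        rw [← intervalIntegral.integral_interval_sub_left hxint hxint']
        have hm1 : (x - j) ∈ Icc (0:ℝ) y := ⟨by have := lt_of_lt_of_le hjε (min_le_left _ _); linarith,
          by linarith⟩
        have hm2 : (x + j) ∈ Icc (0:ℝ) y := ⟨by linarith,
          by have := lt_of_lt_of_le hjε (min_le_right _ _); linarith⟩
        have := hmono hm1 hm2 (by linarith)
        simpa using sub_nonneg.mpr this
      rw [setAverage_eq, h1]
      exact smul_nonneg (by positivity) h2
    have hlim : 0 ≤ h x := ge_of_tendsto htend hev
    rwa [hh, Set.indicator_of_mem (Ioo_subset_Icc_self hxmem)] at hlim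
  have : (volume.restrict (Icc (0:ℝ) y)) = volume.restrict (Ioo (0:ℝ) y) := by
    exact (Measure.restrict_congr_set Ioo_ae_eq_Icc).symm
  rw [this]
  filter_upwards [ae_restrict_of_ae key, ae_restrict_mem measurableSet_Ioo] with x h1 h2
  exact h1 h2

/-- The `L_p`-index of lack of increase: the infimum of `(∫₀^y |g' - f'|^p)^(1/p)` over
non-decreasing absolutely continuous `f` with `f 0 = 0` equals `(∫₀^y ((g')⁻)^p)^(1/p)`,
and it is attained at the function `f₁` with `f₁' = (g')⁺`, independently of `p`. -/
theorem loi_Lp_eq_integral_neg_part (y p : ℝ) (hy : 0 < y) (hp : 1 ≤ p) (g g' : ℝ → ℝ)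
    (hg' : IntervalIntegrable g' volume 0 y)
    (hg : ∀ x ∈ Icc (0 : ℝ) y, g x = ∫ t in (0 : ℝ)..x, g' t)
    (hgp : IntervalIntegrable (fun x => (max (-(g' x)) 0) ^ p) volume 0 y) :
    sInf {r : ℝ | ∃ f' : ℝ → ℝ, IntervalIntegrable f' volume 0 y ∧
        MonotoneOn (fun x => ∫ t in (0 : ℝ)..x, f' t) (Icc (0 : ℝ) y) ∧
        IntervalIntegrable (fun x => |g' x - f' x| ^ p) volume 0 y ∧
        r = (∫ x in (0 : ℝ)..y, |g' x - f' x| ^ p) ^ (1 / p)} =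
      (∫ x in (0 : ℝ)..y, (max (-(g' x)) 0) ^ p) ^ (1 / p) ∧
    MonotoneOn (fun x => ∫ t in (0 : ℝ)..x, max (g' t) 0) (Icc (0 : ℝ) y) ∧
    (∫ x in (0 : ℝ)..y, |g' x - max (g' x) 0| ^ p) ^ (1 / p) =
      (∫ x in (0 : ℝ)..y, (max (-(g' x)) 0) ^ p) ^ (1 / p) := by
  have hp0 : (0:ℝ) ≤ p := by linarith
  have habs : ∀ x, |g' x - max (g' x) 0| = max (-(g' x)) 0 := by
    intro x
    rcases le_total (g' x) 0 with h | h
    · rw [max_eq_right h, max_eq_left (by linarith), sub_zero, abs_of_nonpos h]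
    · rw [max_eq_left h, max_eq_right (by linarith), sub_self, abs_zero]
  have hfun : (fun x => |g' x - max (g' x) 0| ^ p) = (fun x => (max (-(g' x)) 0) ^ p) :=
    funext fun x => by rw [habs]
  -- integrability of the positive part
  have hpos : IntervalIntegrable (fun x => max (g' x) 0) volume 0 y := by
    have : (fun x => max (g' x) 0) = fun x => (g' x + |g' x|) / 2 := by
      funext x
      rcases le_total (g' x) 0 with h | h
      · rw [max_eq_right h, abs_of_nonpos h]; ring
      · rw [max_eq_left h, abs_of_nonneg h]; ring
    rw [this]
    exact (hg'.add hg'.abs).div_const 2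
  -- monotonicity of the primitive of the positive part
  have hmono : MonotoneOn (fun x => ∫ t in (0 : ℝ)..x, max (g' t) 0) (Icc (0 : ℝ) y) := by
    intro a ha b hb hab
    simp only
    rw [← sub_nonneg, intervalIntegral.integral_interval_sub_left
      (hpos.mono_set (by rw [uIcc_of_le hb.1, uIcc_of_le hy.le]; exact Icc_subset_Icc le_rfl hb.2))
      (hpos.mono_set (by rw [uIcc_of_le ha.1, uIcc_of_le hy.le]; exact Icc_subset_Icc le_rfl ha.2))]
    exact intervalIntegral.integral_nonneg hab fun t _ => le_max_right _ _
  have hthird : (∫ x in (0 : ℝ)..y, |g' x - max (g' x) 0| ^ p) ^ (1 / p) =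
      (∫ x in (0 : ℝ)..y, (max (-(g' x)) 0) ^ p) ^ (1 / p) := by rw [hfun]
  refine ⟨?_, hmono, hthird⟩
  apply IsLeast.csInf_eq
  constructor
  · exact ⟨fun x => max (g' x) 0, hpos, hmono, hfun ▸ hgp, hthird.symm⟩
  · rintro r ⟨f', hfi, hfm, hfint, rfl⟩
    have hnn := ae_nonneg_of_monotone_primitive hy hfi hfm
    have hae : (fun x => (max (-(g' x)) 0) ^ p) ≤ᵐ[volume.restrict (Icc (0:ℝ) y)]
        fun x => |g' x - f' x| ^ p := by
      filter_upwards [hnn] with x hx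
      apply Real.rpow_le_rpow (le_max_right _ _) _ hp0
      apply max_le _ (abs_nonneg _)
      calc -(g' x) ≤ f' x - g' x := by linarith
        _ = -(g' x - f' x) := by ring
        _ ≤ |g' x - f' x| := neg_le_abs _
    have hint_le : (∫ x in (0 : ℝ)..y, (max (-(g' x)) 0) ^ p) ≤
        ∫ x in (0 : ℝ)..y, |g' x - f' x| ^ p :=
      intervalIntegral.integral_mono_ae_restrict hy.le hgp hfint hae
    exact Real.rpow_le_rpow
      (intervalIntegral.integral_nonneg hy.le fun x _ => Real.rpow_nonneg (le_max_right _ _) p)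
      hint_le (by positivity)
end

section
/- Let y > 0 and let g ∈ 𝓕_y with integrable derivative g' satisfying ∫₀^y |g'| dλ > 0. Then the normalized index of lack of monotonicity satisfies LOM*_y(g) = 2 min{LOI*_y(g), LOD*_y(g)} = 1 − |g(y)| / ∫₀^y |g'| dλ. -/
open MeasureTheory Set

/-- The normalized index of lack of monotonicity
`LOM*_y(g) = 2 min{LOI*_y(g), LOD*_y(g)}` equals `1 - |g(y)| / ∫₀^y |g'|`. -/
theorem lom_star_eq (y : ℝ) (hy : 0 < y) (g g' : ℝ → ℝ)
    (hg' : IntervalIntegrable g' volume 0 y)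
    (hg : ∀ x ∈ Icc (0 : ℝ) y, g x = ∫ t in (0 : ℝ)..x, g' t)
    (hpos : 0 < ∫ x in (0 : ℝ)..y, |g' x|) :
    2 * min ((∫ x in (0 : ℝ)..y, max (-(g' x)) 0) / ∫ x in (0 : ℝ)..y, |g' x|)
        ((∫ x in (0 : ℝ)..y, max (g' x) 0) / ∫ x in (0 : ℝ)..y, |g' x|) =
      1 - |g y| / ∫ x in (0 : ℝ)..y, |g' x| := by
  have habs : IntervalIntegrable (fun x => |g' x|) volume 0 y := hg'.abs
  have hP : IntervalIntegrable (fun x => max (g' x) 0) volume 0 y := by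
    have : (fun x => max (g' x) 0) = fun x => (g' x + |g' x|) / 2 := by
      funext x; rcases le_total (g' x) 0 with h | h <;>
        simp [abs_of_nonpos, abs_of_nonneg, h, max_eq_right, max_eq_left] <;> ring
    rw [this]; exact (hg'.add habs).div_const 2
  have hN : IntervalIntegrable (fun x => max (-(g' x)) 0) volume 0 y := by
    have : (fun x => max (-(g' x)) 0) = fun x => (|g' x| - g' x) / 2 := by
      funext x; rcases le_total (g' x) 0 with h | h <;>
        simp [abs_of_nonpos, abs_of_nonneg, h, max_eq_right, max_eq_left,
          neg_nonneg, neg_nonpos] <;> ring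
    rw [this]; exact (habs.sub hg').div_const 2
  set P := ∫ x in (0 : ℝ)..y, max (g' x) 0 with hPdef
  set N := ∫ x in (0 : ℝ)..y, max (-(g' x)) 0 with hNdef
  set I := ∫ x in (0 : ℝ)..y, |g' x| with hIdef
  have hI : I = P + N := by
    rw [hIdef, hPdef, hNdef, ← intervalIntegral.integral_add hP hN]
    apply intervalIntegral.integral_congr
    intro x _
    rcases le_total (g' x) 0 with h | h <;>
      simp [abs_of_nonpos, abs_of_nonneg, h, neg_nonneg, neg_nonpos,
        max_eq_right, max_eq_left] <;> ring
  have hgy : g y = P - N := by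
    rw [hg y (by constructor <;> linarith), hPdef, hNdef,
      ← intervalIntegral.integral_sub hP hN]
    apply intervalIntegral.integral_congr
    intro x _
    rcases le_total (g' x) 0 with h | h <;>
      simp [h, neg_nonneg, neg_nonpos, max_eq_right, max_eq_left] <;> ring
  have hImin : min (N / I) (P / I) = min N P / I := by
    rw [div_eq_mul_inv, div_eq_mul_inv, div_eq_mul_inv,
      ← min_mul_of_nonneg _ _ (by positivity : (0:ℝ) ≤ I⁻¹)]
  rw [hImin, hgy]
  have h2 : 2 * min N P = I - |P - N| := by
    rcases le_total N P with h | h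
    · rw [min_eq_left h, abs_of_nonneg (by linarith)]; linarith
    · rw [min_eq_right h, abs_of_nonpos (by linarith)]; linarith
  field_simp
  linarith [h2, mul_comm (min N P) 2]
end

section
/- Let y > 0 and let g ∈ 𝓕_y with integrable derivative g' satisfying ∫₀^y |g'| dλ > 0. Then LOI*_y(g) = 0 if and only if g is non-decreasing on [0,y] (equivalently, (g')⁻ = 0 λ-almost everywhere on [0,y]), and LOI*_y(g) = 1 if and only if g is non-increasing on [0,y] (equivalently, (g')⁺ = 0 λ-almost everywhere on [0,y]). -/
open MeasureTheory Set

/-- Auxiliary: monotonicity of the primitive is equivalent to a.e. nonnegativity of the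
derivative. -/
lemma monotoneOn_iff_ae_nonneg (y : ℝ) (hy : 0 < y) (g g' : ℝ → ℝ)
    (hg' : IntervalIntegrable g' volume 0 y)
    (hg : ∀ x ∈ Icc (0 : ℝ) y, g x = ∫ t in (0 : ℝ)..x, g' t) :
    MonotoneOn g (Icc (0 : ℝ) y) ↔
      (∀ᵐ x ∂(volume.restrict (Icc (0 : ℝ) y)), 0 ≤ g' x) := by
  constructor
  · intro hmono
    -- use the Lebesgue differentiation theorem for the indicator extension of g'
    set h : ℝ → ℝ := (Ioc (0 : ℝ) y).indicator g' with hh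
    have hint : Integrable h volume :=
      (hg'.1).integrable_indicator measurableSet_Ioc
    have hloc : LocallyIntegrable h volume := hint.locallyIntegrable
    have hae := IsUnifLocDoublingMeasure.ae_tendsto_average (μ := volume) hloc 1
    rw [Measure.restrict_congr_set (Ioo_ae_eq_Icc (a := (0:ℝ)) (b := y)).symm]
    rw [ae_restrict_iff' measurableSet_Ioo]
    filter_upwards [hae] with x hx hxmem
    have hxI : x ∈ Ioc (0 : ℝ) y := ⟨hxmem.1, hxmem.2.le⟩
    have hxh : h x = g' x := indicator_of_mem hxI g'
    have htend : Filter.Tendsto (fun r => ⨍ t in Metric.closedBall x r, h t)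
        (nhdsWithin 0 (Ioi 0)) (nhds (g' x)) := by
      have := hx (ι := ℝ) (l := nhdsWithin 0 (Ioi 0)) (fun _ => x) id
        Filter.tendsto_id ?_
      · rwa [hxh] at this
      · filter_upwards [self_mem_nhdsWithin] with r hr
        exact Metric.mem_closedBall_self (by simpa using (le_of_lt hr))
    refine ge_of_tendsto htend ?_
    have hmin : (0 : ℝ) < min x (y - x) := lt_min hxmem.1 (by linarith [hxmem.2])
    filter_upwards [Ioo_mem_nhdsGT_of_mem (by exact ⟨le_refl 0, hmin⟩ :
        (0 : ℝ) ∈ Ico 0 (min x (y - x)))] with r hr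
    have hr0 : 0 < r := hr.1
    have hrx : r < x := lt_of_lt_of_le hr.2 (min_le_left _ _)
    have hry : r < y - x := lt_of_lt_of_le hr.2 (min_le_right _ _)
    -- the closed ball is inside (0, y]
    have hball : Metric.closedBall x r = Icc (x - r) (x + r) := Real.closedBall_eq_Icc
    have hsub : Icc (x - r) (x + r) ⊆ Ioc (0 : ℝ) y := fun t ht =>
      ⟨by linarith [ht.1], by linarith [ht.2]⟩
    have hIab : IntervalIntegrable g' volume 0 (x + r) :=
      hg'.mono_set (by
        rw [uIcc_of_le (by linarith), uIcc_of_le hy.le]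
        exact Icc_subset_Icc le_rfl (by linarith))
    have hIac : IntervalIntegrable g' volume 0 (x - r) :=
      hg'.mono_set (by
        rw [uIcc_of_le (by linarith), uIcc_of_le hy.le]
        exact Icc_subset_Icc le_rfl (by linarith))
    have hint0 : (0 : ℝ) ≤ ∫ t in Metric.closedBall x r, h t := by
      rw [hball, hh, setIntegral_indicator measurableSet_Ioc,
        inter_eq_self_of_subset_left hsub, integral_Icc_eq_integral_Ioc,
        ← intervalIntegral.integral_of_le (by linarith : x - r ≤ x + r),
        ← intervalIntegral.integral_interval_sub_left hIab hIac]
      have h1 : g (x + r) = ∫ t in (0:ℝ)..(x + r), g' t :=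
        hg _ ⟨by linarith, by linarith⟩
      have h2 : g (x - r) = ∫ t in (0:ℝ)..(x - r), g' t :=
        hg _ ⟨by linarith, by linarith⟩
      rw [← h1, ← h2, sub_nonneg]
      exact hmono ⟨by linarith, by linarith⟩ ⟨by linarith, by linarith⟩ (by linarith)
    rw [average_eq]
    exact smul_nonneg (by positivity) hint0
  · intro hae a ha b hb hab
    have h1 : g a = ∫ t in (0:ℝ)..a, g' t := hg a ha
    have h2 : g b = ∫ t in (0:ℝ)..b, g' t := hg b hb
    have hIa : IntervalIntegrable g' volume 0 a := by
      refine hg'.mono_set ?_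
      rw [uIcc_of_le ha.1, uIcc_of_le hy.le]
      exact Icc_subset_Icc le_rfl ha.2
    have hIb : IntervalIntegrable g' volume 0 b := by
      refine hg'.mono_set ?_
      rw [uIcc_of_le hb.1, uIcc_of_le hy.le]
      exact Icc_subset_Icc le_rfl hb.2
    have key : (0 : ℝ) ≤ ∫ t in a..b, g' t := by
      refine intervalIntegral.integral_nonneg_of_ae_restrict hab ?_
      exact ae_restrict_of_ae_restrict_of_subset (Icc_subset_Icc ha.1 hb.2) hae
    have := intervalIntegral.integral_interval_sub_left hIb hIa
    rw [h1, h2, ← sub_nonneg, this]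
    exact key

/-- Extreme values of the normalized index of lack of increase
`LOI*_y(g) = ∫₀^y (g')⁻ / ∫₀^y |g'|`: it is `0` iff `g` is non-decreasing on `[0,y]`
(equivalently, `(g')⁻ = 0` a.e. on `[0,y]`), and it is `1` iff `g` is non-increasing
on `[0,y]` (equivalently, `(g')⁺ = 0` a.e. on `[0,y]`). -/
theorem loi_star_extremes (y : ℝ) (hy : 0 < y) (g g' : ℝ → ℝ)
    (hg' : IntervalIntegrable g' volume 0 y)
    (hg : ∀ x ∈ Icc (0 : ℝ) y, g x = ∫ t in (0 : ℝ)..x, g' t)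
    (hpos : 0 < ∫ x in (0 : ℝ)..y, |g' x|) :
    (((∫ x in (0 : ℝ)..y, max (-(g' x)) 0) / ∫ x in (0 : ℝ)..y, |g' x|) = 0 ↔
        MonotoneOn g (Icc (0 : ℝ) y)) ∧
    (((∫ x in (0 : ℝ)..y, max (-(g' x)) 0) / ∫ x in (0 : ℝ)..y, |g' x|) = 0 ↔
        (∀ᵐ x ∂(volume.restrict (Icc (0 : ℝ) y)), max (-(g' x)) 0 = 0)) ∧
    (((∫ x in (0 : ℝ)..y, max (-(g' x)) 0) / ∫ x in (0 : ℝ)..y, |g' x|) = 1 ↔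
        AntitoneOn g (Icc (0 : ℝ) y)) ∧
    (((∫ x in (0 : ℝ)..y, max (-(g' x)) 0) / ∫ x in (0 : ℝ)..y, |g' x|) = 1 ↔
        (∀ᵐ x ∂(volume.restrict (Icc (0 : ℝ) y)), max (g' x) 0 = 0)) := by
  have hA : (∫ x in (0 : ℝ)..y, |g' x|) ≠ 0 := ne_of_gt hpos
  -- integrability of the positive/negative parts on Ioc 0 y
  have hIneg : IntegrableOn (fun x => max (-(g' x)) 0) (Ioc (0 : ℝ) y) volume :=
    (hg'.1.neg).pos_part
  have hIpos : IntegrableOn (fun x => max (g' x) 0) (Ioc (0 : ℝ) y) volume :=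
    (hg'.1).pos_part
  have hIabs : IntegrableOn (fun x => |g' x|) (Ioc (0 : ℝ) y) volume := hg'.1.abs
  have hrestr : volume.restrict (Icc (0 : ℝ) y) = volume.restrict (Ioc (0 : ℝ) y) :=
    Measure.restrict_congr_set Ioc_ae_eq_Icc.symm
  -- rewrite the interval integrals as set integrals over Ioc 0 y
  have hN : (∫ x in (0 : ℝ)..y, max (-(g' x)) 0) =
      ∫ x in Ioc (0 : ℝ) y, max (-(g' x)) 0 :=
    intervalIntegral.integral_of_le hy.le
  have hAeq : (∫ x in (0 : ℝ)..y, |g' x|) = ∫ x in Ioc (0 : ℝ) y, |g' x| :=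
    intervalIntegral.integral_of_le hy.le
  -- N = 0 iff a.e. (g')⁻ = 0
  have hNzero : (∫ x in (0 : ℝ)..y, max (-(g' x)) 0) = 0 ↔
      (∀ᵐ x ∂(volume.restrict (Icc (0 : ℝ) y)), max (-(g' x)) 0 = 0) := by
    rw [hN, hrestr]
    have h0 := integral_eq_zero_iff_of_nonneg (μ := volume.restrict (Ioc (0:ℝ) y))
      (f := fun x => max (-(g' x)) 0) (fun x => le_max_right _ _) hIneg
    refine h0.trans ?_
    constructor
    · intro h; filter_upwards [h] with x hx; simpa using hx
    · intro h; filter_upwards [h] with x hx; simpa using hx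
  -- A - N = P
  have hsplit : (∫ x in Ioc (0 : ℝ) y, |g' x|) -
      (∫ x in Ioc (0 : ℝ) y, max (-(g' x)) 0) = ∫ x in Ioc (0 : ℝ) y, max (g' x) 0 := by
    rw [← integral_sub hIabs hIneg]
    refine integral_congr_ae (Filter.Eventually.of_forall fun x => ?_)
    show |g' x| - max (-(g' x)) 0 = max (g' x) 0
    rcases le_total (g' x) 0 with h | h
    · rw [abs_of_nonpos h, max_eq_left (by linarith), max_eq_right h]; ring
    · rw [abs_of_nonneg h, max_eq_right (by linarith), max_eq_left h]; ring
  -- P = 0 iff a.e. (g')⁺ = 0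
  have hPzero : (∫ x in Ioc (0 : ℝ) y, max (g' x) 0) = 0 ↔
      (∀ᵐ x ∂(volume.restrict (Icc (0 : ℝ) y)), max (g' x) 0 = 0) := by
    rw [hrestr]
    have h0 := integral_eq_zero_iff_of_nonneg (μ := volume.restrict (Ioc (0:ℝ) y))
      (f := fun x => max (g' x) 0) (fun x => le_max_right _ _) hIpos
    refine h0.trans ?_
    constructor
    · intro h; filter_upwards [h] with x hx; simpa using hx
    · intro h; filter_upwards [h] with x hx; simpa using hx
  -- the 0 case as a.e. statement
  have hzero_iff : ((∫ x in (0 : ℝ)..y, max (-(g' x)) 0) /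
      ∫ x in (0 : ℝ)..y, |g' x|) = 0 ↔
      (∀ᵐ x ∂(volume.restrict (Icc (0 : ℝ) y)), max (-(g' x)) 0 = 0) := by
    rw [div_eq_zero_iff, or_iff_left hA, hNzero]
  -- the 1 case as a.e. statement
  have hone_iff : ((∫ x in (0 : ℝ)..y, max (-(g' x)) 0) /
      ∫ x in (0 : ℝ)..y, |g' x|) = 1 ↔
      (∀ᵐ x ∂(volume.restrict (Icc (0 : ℝ) y)), max (g' x) 0 = 0) := by
    rw [div_eq_one_iff_eq hA, ← hPzero, ← hsplit, hN, hAeq]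
    constructor
    · intro h; rw [h]; ring
    · intro h; linarith [h]
  -- a.e. statements versus monotonicity
  have hmono := monotoneOn_iff_ae_nonneg y hy g g' hg' hg
  have hanti : AntitoneOn g (Icc (0 : ℝ) y) ↔
      (∀ᵐ x ∂(volume.restrict (Icc (0 : ℝ) y)), g' x ≤ 0) := by
    have hg'neg : IntervalIntegrable (fun x => -(g' x)) volume 0 y := hg'.neg
    have hgneg : ∀ x ∈ Icc (0 : ℝ) y, (-g) x = ∫ t in (0 : ℝ)..x, -(g' t) := by
      intro x hx
      rw [intervalIntegral.integral_neg]
      simp [hg x hx]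
    have := monotoneOn_iff_ae_nonneg y hy (-g) (fun x => -(g' x)) hg'neg hgneg
    constructor
    · intro h
      have hm : MonotoneOn (-g) (Icc (0 : ℝ) y) := fun a ha b hb hab => by
        simpa using neg_le_neg (h ha hb hab)
      filter_upwards [this.mp hm] with x hx
      linarith
    · intro h
      have hm : MonotoneOn (-g) (Icc (0 : ℝ) y) := by
        refine this.mpr ?_
        filter_upwards [h] with x hx
        simpa using hx
      intro a ha b hb hab
      have := hm ha hb hab
      simpa using this
  have hmax_neg : ∀ x : ℝ, max (-(g' x)) 0 = 0 ↔ 0 ≤ g' x := by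
    intro x
    rw [max_eq_right_iff]
    constructor <;> intro h <;> linarith
  have hmax_pos : ∀ x : ℝ, max (g' x) 0 = 0 ↔ g' x ≤ 0 := by
    intro x
    rw [max_eq_right_iff]
  refine ⟨?_, hzero_iff, ?_, hone_iff⟩
  · rw [hzero_iff, hmono]
    constructor
    · intro h; filter_upwards [h] with x hx; exact (hmax_neg x).mp hx
    · intro h; filter_upwards [h] with x hx; exact (hmax_neg x).mpr hx
  · rw [hone_iff, hanti]
    constructor
    · intro h; filter_upwards [h] with x hx; exact (hmax_pos x).mp hx
    · intro h; filter_upwards [h] with x hx; exact (hmax_pos x).mpr hx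
end

section
/- Let y > 0 and let g ∈ 𝓕_y with integrable derivative g' satisfying ∫₀^y |g'| dλ > 0. Then LOM*_y(g) = 0 if and only if g is either non-decreasing everywhere on [0,y] or non-increasing everywhere on [0,y], and LOM*_y(g) = 1 if and only if LOI*_y(g) = LOD*_y(g). -/
/-!
Since `|g'| = (g')⁺ + (g')⁻`, the two normalized indices are nonnegative and sum to `1`, so
`2 min` of them is `1` exactly when they are equal, and `0` exactly when one of the integrals
`∫ (g')⁻`, `∫ (g')⁺` vanishes. By Lebesgue's differentiation theorem `g` has derivative `g'`
almost everywhere, so `g` is monotone on `[0, y]` iff `g' ≥ 0` a.e. there, i.e. iff `∫ (g')⁻ = 0`;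
symmetrically for antitone.
-/

open MeasureTheory Set

section Primitive

variable {f : ℝ → ℝ} {a b : ℝ}

theorem monotoneOn_primitive_iff (hab : a ≤ b) (hf : IntervalIntegrable f volume a b) :
    MonotoneOn (fun x => ∫ t in a..x, f t) (Icc a b) ↔ 0 ≤ᵐ[volume.restrict (Ioc a b)] f := by
  have hsub : ∀ x ∈ Icc a b, IntervalIntegrable f volume a x := fun x hx =>
    hf.mono_set (by rw [uIcc_of_le hab, uIcc_of_le hx.1]; exact Icc_subset_Icc le_rfl hx.2)
  constructor
  · intro hmono
    filter_upwards [ae_restrict_of_ae hf.ae_hasDerivAt_integral,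
      ae_restrict_mem measurableSet_Ioc] with x hderiv hx
    have hx' : x ∈ Icc a b := Ioc_subset_Icc_self hx
    have hF := (hderiv (by rwa [uIcc_of_le hab]) a left_mem_uIcc).hasDerivWithinAt
      (s := Icc a b)
    rw [← hF.derivWithin (uniqueDiffOn_Icc (hx.1.trans_le hx.2) x hx')]
    exact hmono.derivWithin_nonneg
  · intro hnonneg u hu v hv huv
    have hdiff : (∫ t in a..v, f t) - ∫ t in a..u, f t = ∫ t in u..v, f t :=
      intervalIntegral.integral_interval_sub_left (hsub v hv) (hsub u hu)
    have hint : 0 ≤ ∫ t in u..v, f t := by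
      rw [intervalIntegral.integral_of_le huv]
      exact setIntegral_nonneg_of_ae_restrict
        (ae_restrict_of_ae_restrict_of_subset (Ioc_subset_Ioc hu.1 hv.2) hnonneg)
    linarith

theorem antitoneOn_primitive_iff (hab : a ≤ b) (hf : IntervalIntegrable f volume a b) :
    AntitoneOn (fun x => ∫ t in a..x, f t) (Icc a b) ↔ f ≤ᵐ[volume.restrict (Ioc a b)] 0 := by
  have h := monotoneOn_primitive_iff hab hf.neg
  simp only [Pi.neg_apply, intervalIntegral.integral_neg] at h
  constructor
  · intro hanti
    filter_upwards [h.1 fun u hu v hv huv => neg_le_neg (hanti hu hv huv)] with x hx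
    simpa using hx
  · intro hnonpos u hu v hv huv
    simpa using h.2 (by filter_upwards [hnonpos] with x hx; simpa using hx) hu hv huv

theorem IntervalIntegrable.posPart {μ : Measure ℝ} (hf : IntervalIntegrable f μ a b) :
    IntervalIntegrable (fun x => max (f x) 0) μ a b :=
  ⟨hf.1.pos_part, hf.2.pos_part⟩

theorem intervalIntegral.integral_negPart_eq_zero_iff (hab : a ≤ b)
    (hf : IntervalIntegrable f volume a b) :
    ∫ x in a..b, max (-f x) 0 = 0 ↔ 0 ≤ᵐ[volume.restrict (Ioc a b)] f := by
  rw [integral_eq_zero_iff_of_le_of_nonneg_ae (f := fun x => max (-f x) 0) hab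
    (Filter.Eventually.of_forall fun x => le_max_right _ _) hf.neg.posPart]
  refine Filter.eventually_congr (Filter.Eventually.of_forall fun x => ?_)
  simp

theorem intervalIntegral.integral_posPart_eq_zero_iff (hab : a ≤ b)
    (hf : IntervalIntegrable f volume a b) :
    ∫ x in a..b, max (f x) 0 = 0 ↔ f ≤ᵐ[volume.restrict (Ioc a b)] 0 := by
  rw [integral_eq_zero_iff_of_le_of_nonneg_ae (f := fun x => max (f x) 0) hab
    (Filter.Eventually.of_forall fun x => le_max_right _ _) hf.posPart]
  refine Filter.eventually_congr (Filter.Eventually.of_forall fun x => ?_)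
  simp

theorem intervalIntegral.integral_negPart_add_integral_posPart
    (hf : IntervalIntegrable f volume a b) :
    (∫ x in a..b, max (-f x) 0) + ∫ x in a..b, max (f x) 0 = ∫ x in a..b, |f x| := by
  rw [← integral_add (f := fun x => max (-f x) 0) hf.neg.posPart hf.posPart]
  congr with x
  rw [add_comm, max_zero_add_max_neg_zero_eq_abs_self]

end Primitive

theorem min_eq_zero_iff_of_nonneg {α : Type*} [LinearOrder α] [Zero α] {p q : α}
    (hp : 0 ≤ p) (hq : 0 ≤ q) : min p q = 0 ↔ p = 0 ∨ q = 0 := by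
  rw [min_eq_iff]
  constructor
  · rintro (⟨h, -⟩ | ⟨h, -⟩) <;> simp [h]
  · rintro (rfl | rfl) <;> simp [hp, hq]

theorem two_mul_min_eq_one_iff {α : Type*} [Field α] [LinearOrder α] [IsStrictOrderedRing α]
    {p q : α} (hpq : p + q = 1) : 2 * min p q = 1 ↔ p = q := by
  rcases min_cases p q with ⟨h, _⟩ | ⟨h, _⟩ <;> rw [h] <;> constructor <;> intro h' <;> linarith

/-- Extreme values of the normalized index of lack of monotonicity
`LOM*_y(g) = 2 min{LOI*_y(g), LOD*_y(g)}`: it is `0` iff `g` is non-decreasing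
everywhere on `[0,y]` or non-increasing everywhere on `[0,y]`, and it is `1` iff
`LOI*_y(g) = LOD*_y(g)`. -/
theorem lom_star_extremes (y : ℝ) (hy : 0 < y) (g g' : ℝ → ℝ)
    (hg' : IntervalIntegrable g' volume 0 y)
    (hg : ∀ x ∈ Icc (0 : ℝ) y, g x = ∫ t in (0 : ℝ)..x, g' t)
    (hpos : 0 < ∫ x in (0 : ℝ)..y, |g' x|) :
    (2 * min ((∫ x in (0 : ℝ)..y, max (-(g' x)) 0) / ∫ x in (0 : ℝ)..y, |g' x|)
          ((∫ x in (0 : ℝ)..y, max (g' x) 0) / ∫ x in (0 : ℝ)..y, |g' x|) = 0 ↔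
        (MonotoneOn g (Icc (0 : ℝ) y) ∨ AntitoneOn g (Icc (0 : ℝ) y))) ∧
    (2 * min ((∫ x in (0 : ℝ)..y, max (-(g' x)) 0) / ∫ x in (0 : ℝ)..y, |g' x|)
          ((∫ x in (0 : ℝ)..y, max (g' x) 0) / ∫ x in (0 : ℝ)..y, |g' x|) = 1 ↔
        ((∫ x in (0 : ℝ)..y, max (-(g' x)) 0) / ∫ x in (0 : ℝ)..y, |g' x|) =
          ((∫ x in (0 : ℝ)..y, max (g' x) 0) / ∫ x in (0 : ℝ)..y, |g' x|)) := by
  have hEq : EqOn g (fun x => ∫ t in (0 : ℝ)..x, g' t) (Icc 0 y) := hg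
  have hmono : (∫ x in (0 : ℝ)..y, max (-(g' x)) 0) = 0 ↔ MonotoneOn g (Icc 0 y) :=
    (intervalIntegral.integral_negPart_eq_zero_iff hy.le hg').trans
      ((monotoneOn_primitive_iff hy.le hg').symm.trans hEq.congr_monotoneOn.symm)
  have hanti : (∫ x in (0 : ℝ)..y, max (g' x) 0) = 0 ↔ AntitoneOn g (Icc 0 y) :=
    (intervalIntegral.integral_posPart_eq_zero_iff hy.le hg').trans
      ((antitoneOn_primitive_iff hy.le hg').symm.trans hEq.congr_antitoneOn.symm)
  have hsum : (∫ x in (0 : ℝ)..y, max (-(g' x)) 0) / (∫ x in (0 : ℝ)..y, |g' x|) +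
      (∫ x in (0 : ℝ)..y, max (g' x) 0) / (∫ x in (0 : ℝ)..y, |g' x|) = 1 := by
    rw [← add_div, intervalIntegral.integral_negPart_add_integral_posPart hg', div_self hpos.ne']
  have hnonneg (h : ℝ → ℝ) : 0 ≤ (∫ x in (0 : ℝ)..y, max (h x) 0) / ∫ x in (0 : ℝ)..y, |g' x| :=
    div_nonneg (intervalIntegral.integral_nonneg hy.le fun _ _ => le_max_right _ _) hpos.le
  refine ⟨?_, two_mul_min_eq_one_iff hsum⟩
  rw [mul_eq_zero, or_iff_right two_ne_zero, min_eq_zero_iff_of_nonneg (hnonneg _) (hnonneg _),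
    div_eq_zero_iff, div_eq_zero_iff, or_iff_left hpos.ne', or_iff_left hpos.ne', hmono, hanti]
end

section
/- Let y > 0 and let g, h ∈ 𝓕_y with integrable derivatives g' and h' satisfying ∫₀^y |g'| dλ > 0 and ∫₀^y |h'| dλ > 0. If for every z > 0 one has S⁻_y(z | g) / ∫₀^y |g'| dλ ≤ S⁻_y(z | h) / ∫₀^y |h'| dλ, where S⁻_y(z | f) = λ{x ∈ [0,y] : (f')⁻(x) > z}, then LOI*_y(g) ≤ LOI*_y(h). (Strict non-decrease dominance g ≥_{SI,y} h implies g ≥_{I,y} h.) -/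
open MeasureTheory Set

lemma meas_lt_fun_integrableOn {α : Type*} [MeasurableSpace α] {μ : Measure α} {f : α → ℝ}
    (f_intble : Integrable f μ) (f_nn : 0 ≤ᵐ[μ] f) :
    IntegrableOn (fun t : ℝ => (μ {a | t < f a}).toReal) (Ioi (0 : ℝ)) volume := by
  have mble : Measurable fun t : ℝ => (μ {a | t < f a}).toReal := by
    refine Measurable.ennreal_toReal ?_
    exact Antitone.measurable (fun _ _ hst ↦ measure_mono (fun _ h ↦ lt_of_le_of_lt hst h))
  refine ⟨mble.aestronglyMeasurable, ?_⟩
  rw [hasFiniteIntegral_iff_norm]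
  calc ∫⁻ t in Ioi (0:ℝ), ENNReal.ofReal ‖(μ {a | t < f a}).toReal‖
      ≤ ∫⁻ t in Ioi (0:ℝ), μ {a | t < f a} := by
        refine lintegral_mono fun t => ?_
        rw [Real.norm_eq_abs, abs_of_nonneg ENNReal.toReal_nonneg]
        exact ENNReal.ofReal_toReal_le
    _ = ∫⁻ ω, ENNReal.ofReal (f ω) ∂μ :=
        (lintegral_eq_lintegral_meas_lt μ f_nn f_intble.aemeasurable).symm
    _ < ⊤ := f_intble.lintegral_lt_top

lemma meas_set_eq (y : ℝ) (f : ℝ → ℝ)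
    (hf : IntegrableOn f (Ioc 0 y) volume) (t : ℝ) :
    (volume.restrict (Ioc (0:ℝ) y)) {a | t < max (-(f a)) 0}
      = volume {x ∈ Icc (0 : ℝ) y | t < max (-(f x)) 0} := by
  have hmble : AEMeasurable (fun a => max (-(f a)) 0) (volume.restrict (Ioc (0:ℝ) y)) :=
    (hf.aemeasurable.neg).max aemeasurable_const
  have hns : NullMeasurableSet {a | t < max (-(f a)) 0} (volume.restrict (Ioc (0:ℝ) y)) :=
    nullMeasurableSet_lt aemeasurable_const hmble
  rw [Measure.restrict_apply₀ hns]
  refine measure_congr ?_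
  have h1 : (Ioc (0:ℝ) y : Set ℝ) =ᵐ[volume] Icc (0:ℝ) y := Ioc_ae_eq_Icc
  have := (Filter.EventuallyEq.refl _ ({a | t < max (-(f a)) 0} : Set ℝ)).inter h1
  refine this.trans ?_
  apply Filter.EventuallyEq.of_eq
  ext x
  exact ⟨fun ⟨h1, h2⟩ => ⟨h2, h1⟩, fun ⟨h1, h2⟩ => ⟨h2, h1⟩⟩

/-- Strict non-decrease dominance implies ordering of normalized indices of lack of
increase: if for every `z > 0` the normalized occupation time of `(g')⁻` above `z`
is at most that of `(h')⁻`, then `LOI*_y(g) ≤ LOI*_y(h)`. -/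
theorem strict_dominance_implies_loi_star_le (y : ℝ) (hy : 0 < y) (g g' h h' : ℝ → ℝ)
    (hg' : IntervalIntegrable g' volume 0 y)
    (hg : ∀ x ∈ Icc (0 : ℝ) y, g x = ∫ t in (0 : ℝ)..x, g' t)
    (hh' : IntervalIntegrable h' volume 0 y)
    (hh : ∀ x ∈ Icc (0 : ℝ) y, h x = ∫ t in (0 : ℝ)..x, h' t)
    (hgpos : 0 < ∫ x in (0 : ℝ)..y, |g' x|)
    (hhpos : 0 < ∫ x in (0 : ℝ)..y, |h' x|)
    (hdom : ∀ z > (0 : ℝ),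
      (volume {x ∈ Icc (0 : ℝ) y | z < max (-(g' x)) 0}).toReal /
          (∫ x in (0 : ℝ)..y, |g' x|) ≤
        (volume {x ∈ Icc (0 : ℝ) y | z < max (-(h' x)) 0}).toReal /
          (∫ x in (0 : ℝ)..y, |h' x|)) :
    ((∫ x in (0 : ℝ)..y, max (-(g' x)) 0) / ∫ x in (0 : ℝ)..y, |g' x|) ≤
      ((∫ x in (0 : ℝ)..y, max (-(h' x)) 0) / ∫ x in (0 : ℝ)..y, |h' x|) := by
  set A := ∫ x in (0 : ℝ)..y, |g' x| with hA
  set B := ∫ x in (0 : ℝ)..y, |h' x| with hB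
  have hgOn : IntegrableOn g' (Ioc 0 y) volume :=
    (intervalIntegrable_iff_integrableOn_Ioc_of_le hy.le).mp hg'
  have hhOn : IntegrableOn h' (Ioc 0 y) volume :=
    (intervalIntegrable_iff_integrableOn_Ioc_of_le hy.le).mp hh'
  have hgP : Integrable (fun x => max (-(g' x)) 0) (volume.restrict (Ioc (0:ℝ) y)) :=
    hgOn.neg.pos_part
  have hhP : Integrable (fun x => max (-(h' x)) 0) (volume.restrict (Ioc (0:ℝ) y)) :=
    hhOn.neg.pos_part
  have hgnn : 0 ≤ᵐ[volume.restrict (Ioc (0:ℝ) y)] fun x => max (-(g' x)) 0 :=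
    Filter.Eventually.of_forall fun x => le_max_right _ _
  have hhnn : 0 ≤ᵐ[volume.restrict (Ioc (0:ℝ) y)] fun x => max (-(h' x)) 0 :=
    Filter.Eventually.of_forall fun x => le_max_right _ _
  have hgEq : (∫ x in (0 : ℝ)..y, max (-(g' x)) 0)
      = ∫ t in Ioi (0:ℝ), (volume {x ∈ Icc (0 : ℝ) y | t < max (-(g' x)) 0}).toReal := by
    rw [intervalIntegral.integral_of_le hy.le,
      hgP.integral_eq_integral_meas_lt hgnn]
    exact setIntegral_congr_fun measurableSet_Ioi fun t _ =>
      congrArg ENNReal.toReal (meas_set_eq y g' hgOn t)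
  have hhEq : (∫ x in (0 : ℝ)..y, max (-(h' x)) 0)
      = ∫ t in Ioi (0:ℝ), (volume {x ∈ Icc (0 : ℝ) y | t < max (-(h' x)) 0}).toReal := by
    rw [intervalIntegral.integral_of_le hy.le,
      hhP.integral_eq_integral_meas_lt hhnn]
    exact setIntegral_congr_fun measurableSet_Ioi fun t _ =>
      congrArg ENNReal.toReal (meas_set_eq y h' hhOn t)
  have hgInt : IntegrableOn
      (fun t : ℝ => (volume {x ∈ Icc (0 : ℝ) y | t < max (-(g' x)) 0}).toReal)
      (Ioi (0:ℝ)) volume := by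
    exact (meas_lt_fun_integrableOn hgP hgnn).congr_fun
      (fun t _ => congrArg ENNReal.toReal (meas_set_eq y g' hgOn t)) measurableSet_Ioi
  have hhInt : IntegrableOn
      (fun t : ℝ => (volume {x ∈ Icc (0 : ℝ) y | t < max (-(h' x)) 0}).toReal)
      (Ioi (0:ℝ)) volume := by
    exact (meas_lt_fun_integrableOn hhP hhnn).congr_fun
      (fun t _ => congrArg ENNReal.toReal (meas_set_eq y h' hhOn t)) measurableSet_Ioi
  rw [hgEq, hhEq, ← integral_div, ← integral_div]
  exact setIntegral_mono_on (hgInt.div_const A) (hhInt.div_const B) measurableSet_Ioi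
    fun t ht => hdom t ht
end

section
/- Let y > 0 and let g, h ∈ 𝓕_y with integrable derivatives g' and h' satisfying ∫₀^y |g'| dλ > 0 and ∫₀^y |h'| dλ > 0. If for every z > 0 one has S⁺_y(z | g) / ∫₀^y |g'| dλ ≤ S⁺_y(z | h) / ∫₀^y |h'| dλ, where S⁺_y(z | f) = λ{x ∈ [0,y] : (f')⁺(x) > z}, then LOD*_y(g) ≤ LOD*_y(h). (Strict non-increase dominance g ≥_{SD,y} h implies g ≥_{D,y} h.) -/
/-!
By the layer-cake formula, `∫₀^y (f')⁺ = ∫₀^∞ λ{x ∈ [0,y] : (f')⁺(x) > z} dz` for `f = g, h`.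
After dividing by the total variations, the dominance hypothesis compares the two integrands
pointwise in `z`, so integrating over `z > 0` compares the normalized integrals.
-/

open MeasureTheory Set

namespace MeasureTheory

variable {α β : Type*} [MeasurableSpace α] [MeasurableSpace β] {μ : Measure α} {ν : Measure β}

theorem Integrable.integrableOn_measureReal_lt {f : α → ℝ} (hf : Integrable f μ)
    (hf_nn : 0 ≤ᵐ[μ] f) : IntegrableOn (fun t => μ.real {a | t < f a}) (Ioi 0) := by
  have h_anti : Antitone fun t : ℝ => μ {a | t < f a} :=
    fun _ _ hst => measure_mono fun _ ha => hst.trans_lt ha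
  refine ⟨h_anti.measurable.ennreal_toReal.aestronglyMeasurable, ?_⟩
  calc ∫⁻ t in Ioi 0, ‖μ.real {a | t < f a}‖ₑ
      ≤ ∫⁻ t in Ioi 0, μ {a | t < f a} := lintegral_mono fun t => by
        rw [measureReal_def, Real.enorm_of_nonneg ENNReal.toReal_nonneg]
        exact ENNReal.ofReal_toReal_le
    _ = ∫⁻ a, ENNReal.ofReal (f a) ∂μ :=
        (lintegral_eq_lintegral_meas_lt μ hf_nn hf.aemeasurable).symm
    _ < ⊤ := hf.lintegral_lt_top

theorem integral_div_le_integral_div_of_measureReal_lt_div_le {f : α → ℝ} {g : β → ℝ}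
    {c d : ℝ} (hf : Integrable f μ) (hf_nn : 0 ≤ᵐ[μ] f) (hg : Integrable g ν)
    (hg_nn : 0 ≤ᵐ[ν] g)
    (hdom : ∀ t > 0, μ.real {a | t < f a} / c ≤ ν.real {b | t < g b} / d) :
    (∫ a, f a ∂μ) / c ≤ (∫ b, g b ∂ν) / d := by
  rw [hf.integral_eq_integral_meas_lt hf_nn, hg.integral_eq_integral_meas_lt hg_nn,
    ← integral_div, ← integral_div]
  exact setIntegral_mono_on ((hf.integrableOn_measureReal_lt hf_nn).div_const c)
    ((hg.integrableOn_measureReal_lt hg_nn).div_const d) measurableSet_Ioi hdom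

end MeasureTheory

theorem strict_dominance_implies_lod_star_le_general (y : ℝ) (hy : 0 < y) (g' h' : ℝ → ℝ)
    (hg' : IntervalIntegrable g' volume 0 y)
    (hh' : IntervalIntegrable h' volume 0 y)
    (hdom : ∀ z > (0 : ℝ),
      (volume {x ∈ Icc (0 : ℝ) y | z < max (g' x) 0}).toReal /
          (∫ x in (0 : ℝ)..y, |g' x|) ≤
        (volume {x ∈ Icc (0 : ℝ) y | z < max (h' x) 0}).toReal /
          (∫ x in (0 : ℝ)..y, |h' x|)) :
    ((∫ x in (0 : ℝ)..y, max (g' x) 0) / ∫ x in (0 : ℝ)..y, |g' x|) ≤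
      ((∫ x in (0 : ℝ)..y, max (h' x) 0) / ∫ x in (0 : ℝ)..y, |h' x|) := by
  have integral_eq (f : ℝ → ℝ) :
      ∫ x in (0 : ℝ)..y, max (f x) 0 = ∫ x in Icc 0 y, max (f x) 0 := by
    rw [intervalIntegral.integral_of_le hy.le, integral_Icc_eq_integral_Ioc]
  have integrable_posPart {f : ℝ → ℝ} (hf : IntervalIntegrable f volume 0 y) :
      Integrable (fun x => max (f x) 0) (volume.restrict (Icc 0 y)) :=
    ((intervalIntegrable_iff_integrableOn_Icc_of_le hy.le).mp hf).pos_part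
  have tail_eq (f : ℝ → ℝ) (t : ℝ) : (volume.restrict (Icc 0 y)).real {x | t < max (f x) 0} =
      (volume {x ∈ Icc (0 : ℝ) y | t < max (f x) 0}).toReal := by
    rw [measureReal_def, Measure.restrict_apply' measurableSet_Icc, inter_comm]
    rfl
  rw [integral_eq, integral_eq]
  refine integral_div_le_integral_div_of_measureReal_lt_div_le (integrable_posPart hg')
    (.of_forall fun _ => le_max_right _ _) (integrable_posPart hh')
    (.of_forall fun _ => le_max_right _ _) fun t ht => ?_
  simpa only [tail_eq] using hdom t ht

/-- Strict non-increase dominance implies ordering of normalized indices of lack of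
decrease: if for every `z > 0` the normalized occupation time of `(g')⁺` above `z`
is at most that of `(h')⁺`, then `LOD*_y(g) ≤ LOD*_y(h)`. -/
theorem strict_dominance_implies_lod_star_le (y : ℝ) (hy : 0 < y) (g g' h h' : ℝ → ℝ)
    (hg' : IntervalIntegrable g' volume 0 y)
    (hg : ∀ x ∈ Icc (0 : ℝ) y, g x = ∫ t in (0 : ℝ)..x, g' t)
    (hh' : IntervalIntegrable h' volume 0 y)
    (hh : ∀ x ∈ Icc (0 : ℝ) y, h x = ∫ t in (0 : ℝ)..x, h' t)
    (hgpos : 0 < ∫ x in (0 : ℝ)..y, |g' x|)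
    (hhpos : 0 < ∫ x in (0 : ℝ)..y, |h' x|)
    (hdom : ∀ z > (0 : ℝ),
      (volume {x ∈ Icc (0 : ℝ) y | z < max (g' x) 0}).toReal /
          (∫ x in (0 : ℝ)..y, |g' x|) ≤
        (volume {x ∈ Icc (0 : ℝ) y | z < max (h' x) 0}).toReal /
          (∫ x in (0 : ℝ)..y, |h' x|)) :
    ((∫ x in (0 : ℝ)..y, max (g' x) 0) / ∫ x in (0 : ℝ)..y, |g' x|) ≤
      ((∫ x in (0 : ℝ)..y, max (h' x) 0) / ∫ x in (0 : ℝ)..y, |h' x|) :=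
  strict_dominance_implies_lod_star_le_general y hy g' h' hg' hh' hdom
end

section
/- Let (Ω, 𝒜) be a measurable space and ν a finite signed measure on it with Jordan decomposition ν = ν⁺ − ν⁻. If μ is a finite positive measure on (Ω, 𝒜) with ‖ν − μ‖ = ‖ν⁻‖, then μ = ν⁺; that is, ν⁺ is the unique positive measure at total-variation distance ‖ν⁻‖ from ν. -/
/-!
Let `N` be a Hahn negative set of `ν`, so `ν⁺ N = 0` and `ν⁻ Nᶜ = 0`. On `N` the signed
measure `ν - μ` equals `-(ν⁻ + μ)`, hence
`‖ν - μ‖ ≥ |(ν - μ) N| + |ν - μ| Nᶜ = ‖ν⁻‖ + μ N + |ν - μ| Nᶜ`.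
Equality forces `μ N = 0` and `ν - μ` to vanish on `Nᶜ`, where `ν` coincides with `ν⁺`;
so `μ` and `ν⁺` agree on `Nᶜ` and both vanish on `N`.
-/

open MeasureTheory Set
open scoped ENNReal

namespace MeasureTheory.SignedMeasure

variable {Ω : Type*} [MeasurableSpace Ω] (ν : SignedMeasure Ω) {A : Set Ω}

theorem apply_eq_posPart_real_of_negPart_eq_zero (hA : MeasurableSet A)
    (hnA : ν.toJordanDecomposition.negPart A = 0) :
    ν A = ν.toJordanDecomposition.posPart.real A := by
  rw [ν.apply_eq_posPart_real_sub_negPart_real hA, sub_eq_self, measureReal_def, hnA,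
    ENNReal.toReal_zero]

theorem enorm_sub_toSignedMeasure_apply_of_posPart_eq_zero (μ : Measure Ω) [IsFiniteMeasure μ]
    (hA : MeasurableSet A) (hpA : ν.toJordanDecomposition.posPart A = 0) :
    ‖(ν - μ.toSignedMeasure) A‖ₑ = ν.toJordanDecomposition.negPart A + μ A := by
  rw [sub_apply, ν.apply_eq_posPart_real_sub_negPart_real hA,
    μ.toSignedMeasure_apply_measurable hA, measureReal_def _ A, hpA, ENNReal.toReal_zero,
    zero_sub, ← neg_add', enorm_neg, measureReal_def, measureReal_def,
    ← ENNReal.toReal_add (measure_ne_top _ _) (measure_ne_top _ _),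
    Real.enorm_of_nonneg ENNReal.toReal_nonneg, ENNReal.ofReal_toReal]
  finiteness

theorem negPart_add_add_totalVariation_compl_le (μ : Measure Ω) [IsFiniteMeasure μ]
    (hA : MeasurableSet A) (hpA : ν.toJordanDecomposition.posPart A = 0) :
    ν.toJordanDecomposition.negPart A + μ A + (ν - μ.toSignedMeasure).totalVariation Aᶜ ≤
      (ν - μ.toSignedMeasure).totalVariation univ := by
  rw [← measure_add_measure_compl hA,
    ← enorm_sub_toSignedMeasure_apply_of_posPart_eq_zero ν μ hA hpA]
  gcongr
  exact enorm_le_totalVariation _ _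

end MeasureTheory.SignedMeasure

/-- Uniqueness of the minimizer for the index of lack of positivity: if a finite
positive measure `μ` satisfies `‖ν − μ‖ = ‖ν⁻‖`, then `μ = ν⁺`. -/
theorem lop_minimizer_unique {Ω : Type*} [MeasurableSpace Ω] (ν : SignedMeasure Ω)
    (μ : Measure Ω) [IsFiniteMeasure μ]
    (h : (ν - μ.toSignedMeasure).totalVariation Set.univ =
      ν.toJordanDecomposition.negPart Set.univ) :
    μ = ν.toJordanDecomposition.posPart := by
  set σ := ν - μ.toSignedMeasure
  have hsing := ν.toJordanDecomposition.mutuallySingular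
  set N := hsing.nullSet
  have hN : MeasurableSet N := hsing.measurableSet_nullSet
  have hnN : ν.toJordanDecomposition.negPart N = ν.toJordanDecomposition.negPart univ := by
    rw [← measure_add_measure_compl hN, hsing.measure_compl_nullSet, add_zero]
  have hle := ν.negPart_add_add_totalVariation_compl_le μ hN hsing.measure_nullSet
  rw [h, hnN, add_assoc] at hle
  obtain ⟨hμN, hσN⟩ : μ N = 0 ∧ σ.totalVariation Nᶜ = 0 := by
    simpa using ENNReal.le_of_add_le_add_left (measure_ne_top _ _) (hle.trans (add_zero _).ge)
  have hagree : ∀ A ⊆ Nᶜ, MeasurableSet A → μ A = ν.toJordanDecomposition.posPart A := by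
    intro A hAN hA
    have hσA : σ A = 0 := σ.null_of_totalVariation_zero (measure_mono_null hAN hσN)
    rw [← measureReal_eq_measureReal_iff, ← ν.apply_eq_posPart_real_of_negPart_eq_zero hA
      (measure_mono_null hAN hsing.measure_compl_nullSet),
      ← μ.toSignedMeasure_apply_measurable hA]
    exact (sub_eq_zero.1 hσA).symm
  calc μ = μ.restrict Nᶜ := (Measure.restrict_eq_self_of_ae_mem (compl_mem_ae_iff.2 hμN)).symm
    _ = ν.toJordanDecomposition.posPart.restrict Nᶜ :=
      (Measure.restrict_congr_meas hN.compl).2 hagree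
    _ = ν.toJordanDecomposition.posPart :=
      Measure.restrict_eq_self_of_ae_mem (compl_mem_ae_iff.2 hsing.measure_nullSet)
end

section
/- Let (Ω, 𝒜) be a measurable space and ν a finite signed measure on it with Jordan decomposition ν = ν⁺ − ν⁻. Then the infimum of the total variation ‖ν + μ‖ over all finite positive measures μ on (Ω, 𝒜) (i.e., the total-variation distance from ν to the set of finite nonpositive measures) equals ‖ν⁺‖, and it is attained at μ = ν⁻. -/
open MeasureTheory Set
open scoped ENNReal

/-! If `S` is a Hahn positive set for `ν`, then for every finite measure `μ`,
`ν⁺(Ω) = ν(S) ≤ (ν + μ)(S) ≤ |ν + μ|(Ω)`; and `ν + ν⁻ = ν⁺` is a positive measure, whose total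
variation is `ν⁺(Ω)`. -/

namespace MeasureTheory

variable {Ω : Type*} [MeasurableSpace Ω]

theorem Measure.totalVariation_toSignedMeasure (μ : Measure Ω) [IsFiniteMeasure μ] :
    μ.toSignedMeasure.totalVariation = μ := by
  have hμ : μ.toSignedMeasure.toJordanDecomposition =
      ⟨μ, 0, Measure.MutuallySingular.zero_right⟩ :=
    SignedMeasure.toJordanDecomposition_eq <| by
      simp [JordanDecomposition.toSignedMeasure, Measure.toSignedMeasure_zero]
  simp [SignedMeasure.totalVariation, hμ]

namespace SignedMeasure

theorem add_negPart_eq_posPart (ν : SignedMeasure Ω) :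
    ν + ν.toJordanDecomposition.negPart.toSignedMeasure =
      ν.toJordanDecomposition.posPart.toSignedMeasure := by
  nth_rw 1 [← ν.toSignedMeasure_toJordanDecomposition]
  rw [JordanDecomposition.toSignedMeasure, sub_add_cancel]

theorem exists_apply_eq_posPart_real_univ (ν : SignedMeasure Ω) :
    ∃ S, MeasurableSet S ∧ ν S = ν.toJordanDecomposition.posPart.real univ := by
  obtain ⟨T, hT, hpos, hneg⟩ := ν.toJordanDecomposition.mutuallySingular
  refine ⟨Tᶜ, hT.compl, ?_⟩
  rw [ν.apply_eq_posPart_real_sub_negPart_real hT.compl, measureReal_compl hT,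
    measureReal_def _ T, measureReal_def _ Tᶜ, hpos, hneg]
  simp

theorem posPart_univ_le_totalVariation_add (ν : SignedMeasure Ω) (μ : Measure Ω)
    [IsFiniteMeasure μ] :
    ν.toJordanDecomposition.posPart univ ≤ (ν + μ.toSignedMeasure).totalVariation univ := by
  obtain ⟨S, hS, hνS⟩ := ν.exists_apply_eq_posPart_real_univ
  have hle : ν S ≤ (ν + μ.toSignedMeasure) S := by
    rw [add_apply, μ.toSignedMeasure_apply_measurable hS]
    exact le_add_of_nonneg_right measureReal_nonneg
  calc ν.toJordanDecomposition.posPart univ = ENNReal.ofReal (ν S) := by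
        rw [hνS, ofReal_measureReal (measure_ne_top _ _)]
    _ ≤ ENNReal.ofReal ((ν + μ.toSignedMeasure) S) := ENNReal.ofReal_le_ofReal hle
    _ ≤ ‖(ν + μ.toSignedMeasure) S‖ₑ := Real.ofReal_le_enorm _
    _ ≤ (ν + μ.toSignedMeasure).totalVariation S := enorm_le_totalVariation _ _
    _ ≤ (ν + μ.toSignedMeasure).totalVariation univ := measure_mono (subset_univ S)

end SignedMeasure
end MeasureTheory

/-- The index of lack of negativity of a finite signed measure `ν`: the infimum of the
total variation `‖ν + μ‖` over all finite positive measures `μ` (i.e. the distance from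
`ν` to the set of finite nonpositive measures) equals `‖ν⁺‖`, and it is attained at
`μ = ν⁻`. -/
theorem lon_eq_pos_part {Ω : Type*} [MeasurableSpace Ω] (ν : SignedMeasure Ω) :
    sInf {r : ℝ≥0∞ | ∃ (μ : Measure Ω) (_ : IsFiniteMeasure μ),
        r = (ν + μ.toSignedMeasure).totalVariation Set.univ} =
      ν.toJordanDecomposition.posPart Set.univ ∧
    (ν + ν.toJordanDecomposition.negPart.toSignedMeasure).totalVariation Set.univ =
      ν.toJordanDecomposition.posPart Set.univ := by
  have attained : (ν + ν.toJordanDecomposition.negPart.toSignedMeasure).totalVariation univ =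
      ν.toJordanDecomposition.posPart univ := by
    rw [ν.add_negPart_eq_posPart, Measure.totalVariation_toSignedMeasure]
  refine ⟨le_antisymm ?_ ?_, attained⟩
  · exact sInf_le ⟨ν.toJordanDecomposition.negPart, inferInstance, attained.symm⟩
  · refine le_sInf ?_
    rintro r ⟨μ, _, rfl⟩
    exact ν.posPart_univ_le_totalVariation_add μ
end
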